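/- arXiv:1511.08139 — 2 statements merged into one kernel-verified Lean document; each statement's English description precedes it below -/
import Mathlib

section
/- With the setup below, the c-fold iterated commutator subgroup [SR,_cF] is contained in R, and there is a group isomorphism M^{(c)}(G,N) = (R ∩ [SR,_cF])/[R,_cF] ≅ ([S,_cF]·[T,_cF]·γ_{c+2}(F)) / ([T,_cF]·γ_{c+2}(F)), the latter being a quotient of subgroups of F (the denominator is a normal subgroup of the numerator). -/
open Subgroup

/-- `itComm X Y c` is the `c`-fold iterated commutator subgroup
`[X,_c Y] = ⁅…⁅⁅X,Y⁆,Y⁆,…,Y⁆` (with `c` copies of `Y`); `itComm X Y 0 = X`. -/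
def itComm {P : Type*} [Group P] (X Y : Subgroup P) : ℕ → Subgroup P
  | 0 => X
  | c + 1 => ⁅itComm X Y c, Y⁆

instance itComm_normal {P : Type*} [Group P] (X Y : Subgroup P) [hX : X.Normal] [hY : Y.Normal]
    (c : ℕ) : (itComm X Y c).Normal := by
  induction c with
  | zero => exact hX
  | succ c ih => exact Subgroup.commutator_normal _ _

/-- The free group `F` on `m + n` generators `y_1,…,y_m,x_1,…,x_n`:
the first `m` generators (`Fin.castAdd n i`) are the `y_i`,
the last `n` generators (`Fin.natAdd m j`) are the `x_j`. -/
abbrev Fg (m n : ℕ) : Type := FreeGroup (Fin (m + n))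

/-- `T`, the normal closure in `F` of `{x_1^{r_1},…,x_n^{r_n}}`. -/
abbrev Tsub (m n : ℕ) (r : Fin n → ℕ) : Subgroup (Fg m n) :=
  Subgroup.normalClosure {w | ∃ j : Fin n, w = FreeGroup.of (Fin.natAdd m j) ^ r j}

/-- `S`, the normal closure in `F` of `{y_1,…,y_l,x_1,…,x_t}`. -/
abbrev Ssub (m n l t : ℕ) : Subgroup (Fg m n) :=
  Subgroup.normalClosure
    ({w | ∃ i : Fin m, (i : ℕ) < l ∧ w = FreeGroup.of (Fin.castAdd n i)} ∪
      {w | ∃ j : Fin n, (j : ℕ) < t ∧ w = FreeGroup.of (Fin.natAdd m j)})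

/-- `R = T·γ_2(F)` (note `γ_2(F) = lowerCentralSeries F 1`). -/
abbrev Rsub (m n : ℕ) (r : Fin n → ℕ) : Subgroup (Fg m n) :=
  Tsub m n r ⊔ (⊤ : Subgroup (Fg m n)).lowerCentralSeries 1

/-!
Iterated commutators with `F` distribute over joins of normal subgroups, and
`[γ₂(F),_c F] = γ_{c+2}(F)`. Hence `[R,_c F] = [T,_c F]·γ_{c+2}(F)` and
`[SR,_c F] = [S,_c F]·[T,_c F]·γ_{c+2}(F)`. Since `c ≥ 1`, `[S,_c F]` and `γ_{c+2}(F)` lie in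
`γ₂(F) ≤ R`, while `[T,_c F] ≤ T ≤ R`; so `[SR,_c F] ≤ R`, the intersection with `R` is
`[SR,_c F]` itself, and the two quotients are the same quotient.
-/

section IteratedCommutator

variable {P : Type*} [Group P]
open scoped commutatorElement

theorem Subgroup.sup_commutator (H K L : Subgroup P) [H.Normal] [K.Normal] [L.Normal] :
    ⁅H ⊔ K, L⁆ = ⁅H, L⁆ ⊔ ⁅K, L⁆ := by
  refine le_antisymm ?_ (sup_le (commutator_mono le_sup_left le_rfl)
    (commutator_mono le_sup_right le_rfl))
  rw [commutator_le]
  intro g hg q hq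
  rw [← SetLike.mem_coe, mul_normal] at hg
  obtain ⟨h, hh, k, hk, rfl⟩ := hg
  have key : ⁅h * k, q⁆ = h * ⁅k, q⁆ * h⁻¹ * ⁅h, q⁆ := by
    simp only [commutatorElement_def]; group
  rw [key]
  exact mul_mem
    (mem_sup_right ((commutator_normal K L).conj_mem _ (commutator_mem_commutator hk hq) h))
    (mem_sup_left (commutator_mem_commutator hh hq))

theorem itComm_mono_left {X Y : Subgroup P} (h : X ≤ Y) (c : ℕ) :
    itComm X ⊤ c ≤ itComm Y ⊤ c := by
  induction c with
  | zero => exact h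
  | succ c ih => exact commutator_mono ih le_rfl

theorem itComm_le_self (X : Subgroup P) [X.Normal] (c : ℕ) : itComm X ⊤ c ≤ X := by
  induction c with
  | zero => exact le_rfl
  | succ c ih => exact (commutator_le_left _ _).trans ih

theorem itComm_sup_left (H K : Subgroup P) [H.Normal] [K.Normal] (c : ℕ) :
    itComm (H ⊔ K) ⊤ c = itComm H ⊤ c ⊔ itComm K ⊤ c := by
  induction c with
  | zero => rfl
  | succ c ih => exact (congrArg (⁅·, ⊤⁆) ih).trans (sup_commutator _ _ _)

theorem itComm_lowerCentralSeries (k c : ℕ) :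
    itComm ((⊤ : Subgroup P).lowerCentralSeries k) ⊤ c =
      (⊤ : Subgroup P).lowerCentralSeries (k + c) := by
  induction c with
  | zero => rfl
  | succ c ih => exact congrArg (⁅·, ⊤⁆) ih

theorem itComm_le_lowerCentralSeries_one (X : Subgroup P) {c : ℕ} (hc : 1 ≤ c) :
    itComm X ⊤ c ≤ (⊤ : Subgroup P).lowerCentralSeries 1 :=
  calc itComm X ⊤ c ≤ itComm ⊤ ⊤ c := itComm_mono_left le_top c
    _ = (⊤ : Subgroup P).lowerCentralSeries (0 + c) := itComm_lowerCentralSeries 0 c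
    _ ≤ (⊤ : Subgroup P).lowerCentralSeries 1 :=
      Subgroup.lowerCentralSeries_antitone ⊤ (by omega)

variable (S T : Subgroup P) [S.Normal] [T.Normal]

theorem itComm_sup_lowerCentralSeries_one (c : ℕ) :
    itComm (T ⊔ (⊤ : Subgroup P).lowerCentralSeries 1) ⊤ c =
      itComm T ⊤ c ⊔ (⊤ : Subgroup P).lowerCentralSeries (c + 1) := by
  rw [itComm_sup_left, itComm_lowerCentralSeries, Nat.add_comm 1 c]

theorem itComm_sup_sup_lowerCentralSeries_one (c : ℕ) :
    itComm (S ⊔ (T ⊔ (⊤ : Subgroup P).lowerCentralSeries 1)) ⊤ c =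
      itComm S ⊤ c ⊔ itComm T ⊤ c ⊔ (⊤ : Subgroup P).lowerCentralSeries (c + 1) := by
  rw [itComm_sup_left, itComm_sup_lowerCentralSeries_one, sup_assoc]

theorem itComm_sup_sup_lowerCentralSeries_one_le {c : ℕ} (hc : 1 ≤ c) :
    itComm (S ⊔ (T ⊔ (⊤ : Subgroup P).lowerCentralSeries 1)) ⊤ c ≤
      T ⊔ (⊤ : Subgroup P).lowerCentralSeries 1 := by
  rw [itComm_sup_sup_lowerCentralSeries_one]
  refine sup_le (sup_le ?_ ?_) ?_
  · exact (itComm_le_lowerCentralSeries_one S hc).trans le_sup_right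
  · exact (itComm_le_self T c).trans le_sup_left
  · exact (Subgroup.lowerCentralSeries_antitone ⊤ (by omega)).trans le_sup_right

end IteratedCommutator

theorem multiplier_of_pair_as_quotient_general (c l s t n : ℕ) (hc : 1 ≤ c)
    (r : Fin n → ℕ) :
    itComm (Ssub (l+s) n l t ⊔ Rsub (l+s) n r) ⊤ c ≤ Rsub (l+s) n r ∧
    itComm (Tsub (l+s) n r) ⊤ c ⊔ (⊤ : Subgroup (Fg (l+s) n)).lowerCentralSeries (c+1) ≤
      itComm (Ssub (l+s) n l t) ⊤ c ⊔ itComm (Tsub (l+s) n r) ⊤ c ⊔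
        (⊤ : Subgroup (Fg (l+s) n)).lowerCentralSeries (c+1) ∧
    Nonempty (
      ((Rsub (l+s) n r ⊓ itComm (Ssub (l+s) n l t ⊔ Rsub (l+s) n r) ⊤ c :
          Subgroup (Fg (l+s) n)) ⧸
        (itComm (Rsub (l+s) n r) ⊤ c).subgroupOf
          (Rsub (l+s) n r ⊓ itComm (Ssub (l+s) n l t ⊔ Rsub (l+s) n r) ⊤ c)) ≃*
      ((itComm (Ssub (l+s) n l t) ⊤ c ⊔ itComm (Tsub (l+s) n r) ⊤ c ⊔
          (⊤ : Subgroup (Fg (l+s) n)).lowerCentralSeries (c+1) : Subgroup (Fg (l+s) n)) ⧸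
        (itComm (Tsub (l+s) n r) ⊤ c ⊔ (⊤ : Subgroup (Fg (l+s) n)).lowerCentralSeries (c+1)).subgroupOf
          (itComm (Ssub (l+s) n l t) ⊤ c ⊔ itComm (Tsub (l+s) n r) ⊤ c ⊔
            (⊤ : Subgroup (Fg (l+s) n)).lowerCentralSeries (c+1)))) := by
  have hle := itComm_sup_sup_lowerCentralSeries_one_le (Ssub (l+s) n l t) (Tsub (l+s) n r) hc
  have hnum : Rsub (l+s) n r ⊓ itComm (Ssub (l+s) n l t ⊔ Rsub (l+s) n r) ⊤ c =
      itComm (Ssub (l+s) n l t) ⊤ c ⊔ itComm (Tsub (l+s) n r) ⊤ c ⊔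
        (⊤ : Subgroup (Fg (l+s) n)).lowerCentralSeries (c+1) := by
    rw [inf_eq_right.mpr hle, itComm_sup_sup_lowerCentralSeries_one]
  refine ⟨hle, sup_le (le_sup_right.trans le_sup_left) le_sup_right, ?_⟩
  rw [hnum]
  exact ⟨QuotientGroup.quotientMulEquivOfEq (by rw [itComm_sup_lowerCentralSeries_one])⟩

/-- With `m = l + s`, `F` the free group on `y_1,…,y_m,x_1,…,x_n`, `T` the normal closure of
`{x_j^{r_j}}`, `S` the normal closure of `{y_1,…,y_l,x_1,…,x_t}` and `R = T·γ_2(F)` (so that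
`F/R ≅ G = N ⊕ K` with `SR/R` corresponding to `N`): the `c`-fold iterated commutator
`[SR,_c F]` is contained in `R`; the subgroup `[T,_c F]·γ_{c+2}(F)` is a (normal) subgroup of
`[S,_c F]·[T,_c F]·γ_{c+2}(F)`; and
`M^{(c)}(G,N) = (R ∩ [SR,_c F])/[R,_c F] ≅ ([S,_c F]·[T,_c F]·γ_{c+2}(F))/([T,_c F]·γ_{c+2}(F))`. -/
theorem multiplier_of_pair_as_quotient (c l s t n : ℕ) (hc : 1 ≤ c) (htn : t ≤ n)
    (r : Fin n → ℕ) (hr : ∀ j, 0 < r j) (hdvd : ∀ j k : Fin n, j ≤ k → r j ∣ r k) :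
    itComm (Ssub (l+s) n l t ⊔ Rsub (l+s) n r) ⊤ c ≤ Rsub (l+s) n r ∧
    itComm (Tsub (l+s) n r) ⊤ c ⊔ (⊤ : Subgroup (Fg (l+s) n)).lowerCentralSeries (c+1) ≤
      itComm (Ssub (l+s) n l t) ⊤ c ⊔ itComm (Tsub (l+s) n r) ⊤ c ⊔
        (⊤ : Subgroup (Fg (l+s) n)).lowerCentralSeries (c+1) ∧
    Nonempty (
      ((Rsub (l+s) n r ⊓ itComm (Ssub (l+s) n l t ⊔ Rsub (l+s) n r) ⊤ c :
          Subgroup (Fg (l+s) n)) ⧸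
        (itComm (Rsub (l+s) n r) ⊤ c).subgroupOf
          (Rsub (l+s) n r ⊓ itComm (Ssub (l+s) n l t ⊔ Rsub (l+s) n r) ⊤ c)) ≃*
      ((itComm (Ssub (l+s) n l t) ⊤ c ⊔ itComm (Tsub (l+s) n r) ⊤ c ⊔
          (⊤ : Subgroup (Fg (l+s) n)).lowerCentralSeries (c+1) : Subgroup (Fg (l+s) n)) ⧸
        (itComm (Tsub (l+s) n r) ⊤ c ⊔ (⊤ : Subgroup (Fg (l+s) n)).lowerCentralSeries (c+1)).subgroupOf
          (itComm (Ssub (l+s) n l t) ⊤ c ⊔ itComm (Tsub (l+s) n r) ⊤ c ⊔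
            (⊤ : Subgroup (Fg (l+s) n)).lowerCentralSeries (c+1)))) :=
  multiplier_of_pair_as_quotient_general c l s t n hc r
end

section
/- Let (G,N) be a pair of finite groups which is nilpotent of class at most t, with t ≥ 2 (i.e. [N,_tG] = 1). Then |[N,_cG]| · |M^{(c)}(G,N)| divides |M^{(c)}(G/[N,G], N/[N,G])| · ∏_{i=1}^{t−1} |⊗^{c+1}([N,_iG], G/[N,_iG])|. -/
open Subgroup

/-- The abelianization of a group, written additively. -/
abbrev AbOf (A : Type) [Group A] : Type := Additive (Abelianization A)

/-- Iterated tensor product `M ⊗ B ⊗ ⋯ ⊗ B` (with `c` factors `B`) of `ℤ`-modules. -/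
noncomputable def iterTensor (M B : ModuleCat ℤ) : ℕ → ModuleCat ℤ
  | 0 => M
  | c + 1 => ModuleCat.of ℤ (TensorProduct ℤ (iterTensor M B c) B)

/-- `⊗^{c+1}(A, B) = A^{ab} ⊗_ℤ B^{ab} ⊗_ℤ ⋯ ⊗_ℤ B^{ab}` with `c` factors `B^{ab}`. -/
noncomputable def tensorPair (A B : Type) [Group A] [Group B] (c : ℕ) : ModuleCat ℤ :=
  iterTensor (ModuleCat.of ℤ (AbOf A)) (ModuleCat.of ℤ (AbOf B)) c

/-- `M^{(c)}(G,N) = (R ∩ [S,_c F]) / [R,_c F]`, where `R = ker π` and `S = π⁻¹(N)`,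
relative to the free presentation `π : F ↠ G`. -/
def McPair {F G : Type} [Group F] [Group G] (π : F →* G) (N : Subgroup G) (c : ℕ) : Type :=
  (π.ker ⊓ itComm (N.comap π) ⊤ c : Subgroup F) ⧸
    (itComm π.ker ⊤ c).subgroupOf (π.ker ⊓ itComm (N.comap π) ⊤ c)

noncomputable instance {F G : Type} [Group F] [Group G] (π : F →* G) (N : Subgroup G) (c : ℕ) :
    Group (McPair π N c) :=
  inferInstanceAs (Group ((π.ker ⊓ itComm (N.comap π) ⊤ c : Subgroup F) ⧸
    (itComm π.ker ⊤ c).subgroupOf (π.ker ⊓ itComm (N.comap π) ⊤ c)))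

/-- `M^{(c)}(G/K, N/K) = (T ∩ [S,_c F]) / [T,_c F]`, where `T = π⁻¹(K)` and `S = π⁻¹(N)`,
relative to the free presentation `π : F ↠ G`. -/
def McPairQuot {F G : Type} [Group F] [Group G] (π : F →* G) (N K : Subgroup G) (c : ℕ) :
    Type :=
  (K.comap π ⊓ itComm (N.comap π) ⊤ c : Subgroup F) ⧸
    (itComm (K.comap π) ⊤ c).subgroupOf (K.comap π ⊓ itComm (N.comap π) ⊤ c)

noncomputable instance {F G : Type} [Group F] [Group G] (π : F →* G) (N K : Subgroup G)
    [K.Normal] (c : ℕ) : Group (McPairQuot π N K c) :=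
  inferInstanceAs (Group ((K.comap π ⊓ itComm (N.comap π) ⊤ c : Subgroup F) ⧸
    (itComm (K.comap π) ⊤ c).subgroupOf (K.comap π ⊓ itComm (N.comap π) ⊤ c)))

/-!
Write `R = ker π`, `S = π⁻¹(N)` and `T_i = π⁻¹([N,_i G])`, so that `T_0 = S` and, by nilpotency,
`T_t = R`. Since `π` maps `[S,_c F]` onto `[N,_c G]` with kernel `R ∩ [S,_c F]`, the left-hand side
is the index `|[S,_c F] : [R,_c F]|`, while `M^{(c)}(G/[N,G], N/[N,G])` has order
`|[S,_c F] : [T_1,_c F]|` because `c ≥ 1`. The remaining index `|[T_1,_c F] : [T_t,_c F]|` is the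
product of the orders of the layers `[T_i,_c F] / [T_{i+1},_c F]`.

Each layer is abelian, and `a ↦ ⁅a, f⁆` induces homomorphisms from the `k`-th to the `(k+1)`-st
layer whose images generate it. They depend multiplicatively on `f`, and only on the image of `f`
in `G/[N,_i G]`; this uses `T_i = [S,_i F] ⊔ R` and the relative commutator estimate
`⁅[X,_b F], γ_{a+1}(F)⁆ ≤ [X,_{a+b+1} F]`. Starting from `[N,_i G]^{ab} ↠ T_i/T_{i+1}`, this gives a
surjection from `⊗^{c+1}([N,_i G], G/[N,_i G])` onto the `c`-th layer.
-/

namespace Subgroup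

variable {G : Type*} [Group G]

theorem commutator_commutator_le_of_rotate {H₁ H₂ H₃ M : Subgroup G} [M.Normal]
    (h1 : ⁅⁅H₂, H₃⁆, H₁⁆ ≤ M) (h2 : ⁅⁅H₃, H₁⁆, H₂⁆ ≤ M) : ⁅⁅H₁, H₂⁆, H₃⁆ ≤ M := by
  rw [← QuotientGroup.ker_mk' M, ← map_eq_bot_iff] at h1 h2 ⊢
  simp only [map_commutator] at h1 h2 ⊢
  exact commutator_commutator_eq_bot_of_rotate h1 h2

theorem commutator_sup_right_le {H K₁ K₂ M : Subgroup G} [M.Normal]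
    (h1 : ⁅H, K₁⁆ ≤ M) (h2 : ⁅H, K₂⁆ ≤ M) : ⁅H, K₁ ⊔ K₂⁆ ≤ M := by
  rw [commutator_comm] at h1 h2 ⊢
  rw [← QuotientGroup.ker_mk' M, ← map_eq_bot_iff] at h1 h2 ⊢
  rw [map_commutator, commutator_eq_bot_iff_le_centralizer] at h1 h2 ⊢
  rw [map_sup]
  exact sup_le h1 h2

theorem commutator_comap_comap_le {G' : Type*} [Group G'] (f : G →* G') (H K : Subgroup G') :
    ⁅H.comap f, K.comap f⁆ ≤ ⁅H, K⁆.comap f := by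
  rw [← map_le_iff_le_comap, map_commutator]
  exact commutator_mono (map_comap_le f H) (map_comap_le f K)

end Subgroup

open scoped commutatorElement

section itComm

variable {G G' : Type*} [Group G] [Group G']

theorem itComm_succ (X Y : Subgroup G) (k : ℕ) : itComm X Y (k + 1) = ⁅itComm X Y k, Y⁆ := rfl

theorem itComm_mono {X X' : Subgroup G} (h : X ≤ X') (Y : Subgroup G) (k : ℕ) :
    itComm X Y k ≤ itComm X' Y k := by
  induction k with
  | zero => exact h
  | succ k ih => exact commutator_mono ih le_rfl

theorem itComm_succ_le (X Y : Subgroup G) [X.Normal] [Y.Normal] (k : ℕ) :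
    itComm X Y (k + 1) ≤ itComm X Y k :=
  commutator_le_left _ _

theorem itComm_antitone (X Y : Subgroup G) [X.Normal] [Y.Normal] : Antitone (itComm X Y) :=
  antitone_nat_of_succ_le (itComm_succ_le X Y)

theorem itComm_le_self_s12 (X Y : Subgroup G) [X.Normal] [Y.Normal] (k : ℕ) : itComm X Y k ≤ X :=
  itComm_antitone X Y k.zero_le

theorem itComm_le_lowerCentralSeries (X : Subgroup G) (k : ℕ) :
    itComm X ⊤ k ≤ (⊤ : Subgroup G).lowerCentralSeries k := by
  induction k with
  | zero => exact le_top
  | succ k ih => exact commutator_mono ih le_rfl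

theorem map_itComm_top {f : G →* G'} (hf : Function.Surjective f) (X : Subgroup G) (k : ℕ) :
    (itComm X ⊤ k).map f = itComm (X.map f) ⊤ k := by
  induction k with
  | zero => rfl
  | succ k ih => rw [itComm_succ, map_commutator, ih, map_top_of_surjective f hf, itComm_succ]

theorem itComm_comap_top_le (f : G →* G') (X : Subgroup G') (k : ℕ) :
    itComm (X.comap f) ⊤ k ≤ (itComm X ⊤ k).comap f := by
  induction k with
  | zero => exact le_rfl
  | succ k ih => exact (commutator_mono ih (comap_top f).ge).trans (commutator_comap_comap_le f _ _)

theorem itComm_succ_le_itComm {X Y : Subgroup G} (h : ⁅X, ⊤⁆ ≤ Y) (k : ℕ) :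
    itComm X ⊤ (k + 1) ≤ itComm Y ⊤ k := by
  induction k with
  | zero => exact h
  | succ k ih => exact commutator_mono ih le_rfl

theorem commutator_mem_itComm_succ_left {X : Subgroup G} {k : ℕ} {x : G}
    (hx : x ∈ itComm X ⊤ k) (y : G) : ⁅x, y⁆ ∈ itComm X ⊤ (k + 1) :=
  commutator_mem_commutator hx (mem_top y)

theorem commutator_mem_itComm_succ_right {X : Subgroup G} {k : ℕ} (x : G) {y : G}
    (hy : y ∈ itComm X ⊤ k) : ⁅x, y⁆ ∈ itComm X ⊤ (k + 1) :=
  commutator_comm_le ⊤ _ (commutator_mem_commutator (mem_top x) hy)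

theorem commutator_itComm_lowerCentralSeries_le (X : Subgroup G) [X.Normal] (a b : ℕ) :
    ⁅itComm X ⊤ b, (⊤ : Subgroup G).lowerCentralSeries a⁆ ≤ itComm X ⊤ (a + b + 1) := by
  induction a generalizing b with
  | zero => rw [zero_add]; exact commutator_mono le_rfl le_top
  | succ a ih =>
    rw [Subgroup.lowerCentralSeries_succ, commutator_comm,
      show a + 1 + b + 1 = a + (b + 1) + 1 by omega]
    refine commutator_commutator_le_of_rotate ?_ ?_
    · rw [commutator_comm ⊤, ← itComm_succ]
      exact ih (b + 1)
    · exact commutator_mono (ih b) le_rfl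

end itComm

open scoped TensorProduct

theorem exists_tensor_surjective_of_closure_eq_top {A B C : Type*} [CommGroup A] [Group B]
    [CommGroup C] (φ : B →* A →* C) (hφ : closure {c | ∃ a b, φ b a = c} = ⊤) :
    ∃ f : Additive A ⊗[ℤ] Additive (Abelianization B) →+ Additive C,
      Function.Surjective f := by
  let ψ := Abelianization.lift φ
  let β : Additive A →ₗ[ℤ] Additive (Abelianization B) →ₗ[ℤ] Additive C :=
    LinearMap.mk₂ ℤ (fun a b => Additive.ofMul (ψ b.toMul a.toMul))
      (by simp) (by simp) (by simp) (by simp)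
  have hrange : ∀ c ∈ closure {c | ∃ a b, φ b a = c},
      ∃ x, TensorProduct.lift β x = Additive.ofMul c := by
    intro c hc
    induction hc using closure_induction with
    | mem c hc =>
      obtain ⟨a, b, rfl⟩ := hc
      exact ⟨Additive.ofMul a ⊗ₜ Additive.ofMul (Abelianization.of b), by simp [β, ψ]⟩
    | one => exact ⟨0, by simp⟩
    | mul _ _ _ _ hx hy =>
      obtain ⟨x, hx⟩ := hx
      obtain ⟨y, hy⟩ := hy
      exact ⟨x + y, by simp [hx, hy]⟩
    | inv _ _ hx =>
      obtain ⟨x, hx⟩ := hx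
      exact ⟨-x, by simp [hx]⟩
  exact ⟨(TensorProduct.lift β).toAddMonoidHom, fun c => hrange c.toMul (hφ ▸ mem_top _)⟩

theorem exists_iterTensor_surjective {M B : ModuleCat ℤ} (Q : ℕ → Type*)
    [∀ k, AddCommGroup (Q k)] (h₀ : ∃ f : M →ₗ[ℤ] Q 0, Function.Surjective f)
    (hstep : ∀ k, ∃ f : Q k ⊗[ℤ] B →+ Q (k + 1), Function.Surjective f) (k : ℕ) :
    ∃ f : iterTensor M B k →ₗ[ℤ] Q k, Function.Surjective f := by
  induction k with
  | zero => exact h₀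
  | succ k ih =>
    obtain ⟨g, hg⟩ := ih
    obtain ⟨s, hs⟩ := hstep k
    have hmap : Function.Surjective (TensorProduct.map g (LinearMap.id : B →ₗ[ℤ] B)) :=
      TensorProduct.map_surjective hg Function.surjective_id
    exact ⟨(s.comp (TensorProduct.map g LinearMap.id).toAddMonoidHom).toIntLinearMap,
      hs.comp hmap⟩

section Layer

variable {F : Type*} [Group F] (X Y : Subgroup F)

def layer (k : ℕ) : Type _ :=
  itComm X ⊤ k ⧸ (itComm Y ⊤ k).subgroupOf (itComm X ⊤ k)

theorem card_layer (k : ℕ) : Nat.card (layer X Y k) = (itComm Y ⊤ k).relIndex (itComm X ⊤ k) :=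
  rfl

variable {X Y} {k : ℕ}

def layer.mk (x : F) (hx : x ∈ itComm X ⊤ k) : layer X Y k := QuotientGroup.mk ⟨x, hx⟩

theorem layer.mk_congr {x y : F} (hx : x ∈ itComm X ⊤ k) (hy : y ∈ itComm X ⊤ k) (h : x = y) :
    (layer.mk x hx : layer X Y k) = layer.mk y hy := by
  subst h; rfl

theorem layer.exists_mk_eq (q : layer X Y k) : ∃ x hx, layer.mk x hx = q := by
  obtain ⟨⟨x, hx⟩, rfl⟩ := QuotientGroup.mk_surjective q
  exact ⟨x, hx, rfl⟩

variable [Y.Normal]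

instance (k : ℕ) : Group (layer X Y k) := inferInstanceAs (Group (_ ⧸ _))

theorem layer.mk_mul {x y : F} (hx : x ∈ itComm X ⊤ k) (hy : y ∈ itComm X ⊤ k) :
    (layer.mk x hx * layer.mk y hy : layer X Y k) = layer.mk (x * y) (mul_mem hx hy) :=
  rfl

theorem layer.mk_eq_one {x : F} (hx : x ∈ itComm X ⊤ k) (hy : x ∈ itComm Y ⊤ k) :
    (layer.mk x hx : layer X Y k) = 1 :=
  (QuotientGroup.eq_one_iff _).mpr (mem_subgroupOf.mpr hy)

-- `⁅X, ⊤⁆ ≤ Y` makes every layer abelian; it is a `Fact` so that this can be an instance.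
variable [X.Normal] [Fact (⁅X, ⊤⁆ ≤ Y)]

instance (k : ℕ) : CommGroup (layer X Y k) where
  mul_comm p q := by
    obtain ⟨a, ha, rfl⟩ := layer.exists_mk_eq p
    obtain ⟨b, hb, rfl⟩ := layer.exists_mk_eq q
    have hc : ⁅a⁻¹, b⁻¹⁆ ∈ itComm X ⊤ (k + 1) := commutator_mem_itComm_succ_left (inv_mem ha) _
    calc layer.mk a ha * layer.mk b hb
        = layer.mk (b * a * ⁅a⁻¹, b⁻¹⁆) (mul_mem (mul_mem hb ha) (itComm_succ_le X ⊤ k hc)) :=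
          layer.mk_congr _ _ (by group)
      _ = layer.mk (b * a) (mul_mem hb ha) * layer.mk _ (itComm_succ_le X ⊤ k hc) := rfl
      _ = layer.mk b hb * layer.mk a ha := by
          rw [layer.mk_eq_one _ (itComm_succ_le_itComm Fact.out k hc), mul_one, layer.mk_mul]

end Layer

section LayerPairing

variable {F : Type*} [Group F] {X Y : Subgroup F} [X.Normal] [Y.Normal] [Fact (⁅X, ⊤⁆ ≤ Y)]
  {k : ℕ}

variable (X Y) in
def layerCommutatorHom (k : ℕ) (f : F) : itComm X ⊤ k →* layer X Y (k + 1) where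
  toFun a := layer.mk ⁅(a : F), f⁆ (commutator_mem_itComm_succ_left a.2 f)
  map_one' := layer.mk_eq_one _ (by simp [one_mem])
  map_mul' a b := by
    have hb : ⁅(b : F), f⁆ ∈ itComm X ⊤ (k + 1) := commutator_mem_itComm_succ_left b.2 f
    have hc := commutator_mem_itComm_succ_right (a : F) hb
    calc layer.mk ⁅((a * b : itComm X ⊤ k) : F), f⁆ _
        = layer.mk (⁅(a : F), ⁅(b : F), f⁆⁆ * ⁅(b : F), f⁆ * ⁅(a : F), f⁆)
            (mul_mem (mul_mem (itComm_succ_le X ⊤ _ hc) hb)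
              (commutator_mem_itComm_succ_left a.2 f)) :=
          layer.mk_congr _ _ (by simp only [coe_mul, commutatorElement_def]; group)
      _ = layer.mk _ (itComm_succ_le X ⊤ _ hc) * layer.mk _ hb *
            layer.mk _ (commutator_mem_itComm_succ_left a.2 f) := rfl
      _ = _ := by
          rw [layer.mk_eq_one _ (itComm_succ_le_itComm Fact.out _ hc), one_mul, mul_comm]

variable (X Y) in
def layerCommutator (k : ℕ) (f : F) : layer X Y k →* layer X Y (k + 1) :=
  QuotientGroup.lift _ (layerCommutatorHom X Y k f) fun _ hw =>
    layer.mk_eq_one _ (commutator_mem_itComm_succ_left (mem_subgroupOf.mp hw) _)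

variable (X Y) in
def layerPairing (k : ℕ) : F →* layer X Y k →* layer X Y (k + 1) where
  toFun := layerCommutator X Y k
  map_one' := by
    ext q
    obtain ⟨a, ha, rfl⟩ := layer.exists_mk_eq q
    exact layer.mk_eq_one _ (by simp [one_mem])
  map_mul' f g := by
    ext q
    obtain ⟨a, ha, rfl⟩ := layer.exists_mk_eq q
    have hg : ⁅a, g⁆ ∈ itComm X ⊤ (k + 1) := commutator_mem_itComm_succ_left ha g
    have hc := commutator_mem_itComm_succ_right f hg
    calc layer.mk ⁅a, f * g⁆ _
        = layer.mk (⁅a, f⁆ * ⁅f, ⁅a, g⁆⁆ * ⁅a, g⁆)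
            (mul_mem (mul_mem (commutator_mem_itComm_succ_left ha f) (itComm_succ_le X ⊤ _ hc))
              hg) :=
          layer.mk_congr _ _ (by simp only [commutatorElement_def]; group)
      _ = layer.mk _ (commutator_mem_itComm_succ_left ha f) * layer.mk _ (itComm_succ_le X ⊤ _ hc) *
            layer.mk _ hg := rfl
      _ = _ := by
          rw [layer.mk_eq_one _ (itComm_succ_le_itComm Fact.out _ hc), mul_one]
          rfl

theorem le_ker_layerPairing (h : ⁅itComm X ⊤ k, X⁆ ≤ itComm Y ⊤ (k + 1)) :
    X ≤ (layerPairing X Y k).ker := by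
  intro u hu
  ext q
  obtain ⟨a, ha, rfl⟩ := layer.exists_mk_eq q
  exact layer.mk_eq_one _ (h (commutator_mem_commutator ha hu))

theorem closure_layerPairing_eq_top :
    closure {q | ∃ a f, layerPairing X Y k f a = q} = ⊤ := by
  set P := closure {q | ∃ a f, layerPairing X Y k f a = q}
  have hP : itComm X ⊤ (k + 1) ≤
      (P.comap (QuotientGroup.mk' _)).map (itComm X ⊤ (k + 1)).subtype := by
    refine commutator_le.mpr fun a ha f _ => ?_
    exact ⟨⟨_, commutator_mem_itComm_succ_left ha _⟩, subset_closure ⟨layer.mk a ha, f, rfl⟩, rfl⟩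
  refine eq_top_iff.mpr fun q _ => ?_
  obtain ⟨x, hx, rfl⟩ := layer.exists_mk_eq q
  obtain ⟨y, hy, rfl⟩ := hP hx
  exact hy

end LayerPairing

section Presentation

variable {F G : Type*} [Group F] [Group G] {π : F →* G} (N : Subgroup G)

local notation "𝒯" i:max => Subgroup.comap π (itComm N ⊤ i)

instance fact_commutator_comap_itComm_le (m : ℕ) : Fact (⁅𝒯 m, ⊤⁆ ≤ 𝒯 (m + 1)) :=
  ⟨itComm_comap_top_le π (itComm N ⊤ m) 1⟩

theorem comap_itComm_eq_sup_ker (hπ : Function.Surjective π) (m : ℕ) :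
    𝒯 m = itComm (N.comap π) ⊤ m ⊔ π.ker := by
  rw [← comap_map_eq, map_itComm_top hπ, map_comap_eq_self_of_surjective hπ]

variable [N.Normal]

theorem commutator_itComm_comap_le (hπ : Function.Surjective π) {m : ℕ} (hm : 1 ≤ m) (k : ℕ) :
    ⁅itComm (𝒯 m) ⊤ k, 𝒯 m⁆ ≤ itComm (𝒯 (m + 1)) ⊤ (k + 1) := by
  nth_rewrite 2 [comap_itComm_eq_sup_ker N hπ m]
  apply commutator_sup_right_le
  · calc _ ≤ itComm (𝒯 m) ⊤ (m + k + 1) :=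
          (commutator_mono le_rfl (itComm_le_lowerCentralSeries _ m)).trans
            (commutator_itComm_lowerCentralSeries_le _ m k)
      _ ≤ itComm (𝒯 m) ⊤ (k + 1 + 1) := itComm_antitone _ ⊤ (by omega)
      _ ≤ _ := itComm_succ_le_itComm Fact.out (k + 1)
  · rw [commutator_comm]
    calc _ ≤ itComm π.ker ⊤ (k + 0 + 1) :=
          (commutator_mono le_rfl (itComm_le_lowerCentralSeries _ k)).trans
            (commutator_itComm_lowerCentralSeries_le π.ker k 0)
      _ ≤ _ := itComm_mono (π.ker_le_comap _) ⊤ (k + 1)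

theorem exists_pairing_on_quotient_closure_eq_top (hπ : Function.Surjective π) {m : ℕ}
    (hm : 1 ≤ m) (k : ℕ) :
    ∃ φ : G ⧸ itComm N ⊤ m →* layer (𝒯 m) (𝒯 (m + 1)) k →* layer (𝒯 m) (𝒯 (m + 1)) (k + 1),
      closure {q | ∃ a b, φ b a = q} = ⊤ := by
  let p := (QuotientGroup.mk' (itComm N ⊤ m)).comp π
  have hp : Function.Surjective p := (QuotientGroup.mk'_surjective _).comp hπ
  have hker : p.ker ≤ (layerPairing (𝒯 m) (𝒯 (m + 1)) k).ker := by
    rw [← MonoidHom.comap_ker, QuotientGroup.ker_mk']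
    exact le_ker_layerPairing (commutator_itComm_comap_le N hπ hm k)
  refine ⟨p.liftOfSurjective hp ⟨_, hker⟩, eq_top_iff.mpr ?_⟩
  refine closure_layerPairing_eq_top.ge.trans (closure_mono ?_)
  rintro _ ⟨a, f, rfl⟩
  exact ⟨a, p f, DFunLike.congr_fun (MonoidHom.liftOfRightInverse_comp_apply _ _ _ _ _) a⟩

theorem exists_abelianization_surjective_layer_zero (hπ : Function.Surjective π) (m : ℕ) :
    ∃ f : Abelianization (itComm N ⊤ m) →* layer (𝒯 m) (𝒯 (m + 1)) 0,
      Function.Surjective f := by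
  let p := π.subgroupComap (itComm N ⊤ m)
  have hp := π.subgroupComap_surjective_of_surjective (itComm N ⊤ m) hπ
  let q : 𝒯 m →* layer (𝒯 m) (𝒯 (m + 1)) 0 :=
    { toFun x := layer.mk x.1 x.2, map_one' := rfl, map_mul' _ _ := rfl }
  have hker : p.ker ≤ q.ker := fun x hx =>
    MonoidHom.mem_ker.mpr (layer.mk_eq_one (k := 0) (X := 𝒯 m) x.2
      (π.ker_le_comap _ (congrArg Subtype.val hx)))
  refine ⟨Abelianization.lift (p.liftOfSurjective hp ⟨q, hker⟩), fun y => ?_⟩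
  obtain ⟨x, hx, rfl⟩ := layer.exists_mk_eq y
  exact ⟨Abelianization.of (p ⟨x, hx⟩), by
    rw [Abelianization.lift_apply_of, MonoidHom.liftOfRightInverse_comp_apply]; rfl⟩

end Presentation

section Presentation

variable {F : Type*} {G : Type} [Group F] [Group G] {π : F →* G} (N : Subgroup G) [N.Normal]

local notation "𝒯" i:max => Subgroup.comap π (itComm N ⊤ i)

theorem card_layer_dvd_card_tensorPair (hπ : Function.Surjective π) {m : ℕ} (hm : 1 ≤ m)
    (k : ℕ) :
    Nat.card (layer (𝒯 m) (𝒯 (m + 1)) k) ∣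
      Nat.card (tensorPair (itComm N ⊤ m) (G ⧸ itComm N ⊤ m) k) := by
  have h₀ : ∃ f : ModuleCat.of ℤ (AbOf (itComm N ⊤ m)) →ₗ[ℤ] Additive (layer (𝒯 m) (𝒯 (m + 1)) 0),
      Function.Surjective f := by
    obtain ⟨f, hf⟩ := exists_abelianization_surjective_layer_zero N hπ m
    exact ⟨f.toAdditive.toIntLinearMap, hf⟩
  have hstep : ∀ k, ∃ f : Additive (layer (𝒯 m) (𝒯 (m + 1)) k) ⊗[ℤ]
      ModuleCat.of ℤ (AbOf (G ⧸ itComm N ⊤ m)) →+ Additive (layer (𝒯 m) (𝒯 (m + 1)) (k + 1)),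
      Function.Surjective f := fun k => by
    obtain ⟨φ, hφ⟩ := exists_pairing_on_quotient_closure_eq_top N hπ hm k
    exact exists_tensor_surjective_of_closure_eq_top φ hφ
  obtain ⟨f, hf⟩ := exists_iterTensor_surjective _ h₀ hstep k
  have hdvd := AddSubgroup.card_dvd_of_surjective f.toAddMonoidHom hf
  exact hdvd

end Presentation

theorem relIndex_eq_prod_Ico_of_antitone {G : Type*} [Group G] {H : ℕ → Subgroup G}
    (hH : Antitone H) {m n : ℕ} (hmn : m ≤ n) :
    (H n).relIndex (H m) = ∏ i ∈ Finset.Ico m n, (H (i + 1)).relIndex (H i) := by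
  induction n, hmn using Nat.le_induction with
  | base => simp
  | succ n hmn ih =>
    rw [Finset.prod_Ico_succ_top hmn, ← ih, mul_comm,
      relIndex_mul_relIndex _ _ _ (hH n.le_succ) (hH hmn)]

theorem card_itComm_mul_card_mcPair {F G : Type} [Group F] [Group G] {π : F →* G}
    (hπ : Function.Surjective π) (N : Subgroup G) (c : ℕ) :
    Nat.card (itComm N ⊤ c) * Nat.card (McPair π N c) =
      (itComm π.ker ⊤ c).relIndex (itComm (N.comap π) ⊤ c) := by
  have hN : Nat.card (itComm N ⊤ c) =
      (π.ker ⊓ itComm (N.comap π) ⊤ c).relIndex (itComm (N.comap π) ⊤ c) := by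
    rw [inf_relIndex_right, relIndex_ker, map_itComm_top hπ, map_comap_eq_self_of_surjective hπ]
  rw [hN, mul_comm]
  exact relIndex_mul_relIndex _ _ _
    (le_inf (itComm_le_self_s12 _ _ c) (itComm_mono (π.ker_le_comap N) ⊤ c)) inf_le_right

theorem card_mcPairQuot_itComm_one {F G : Type} [Group F] [Group G] (π : F →* G)
    (N : Subgroup G) [N.Normal] {c : ℕ} (hc : 1 ≤ c) :
    Nat.card (McPairQuot π N (itComm N ⊤ 1) c) =
      (itComm ((itComm N ⊤ 1).comap π) ⊤ c).relIndex (itComm (N.comap π) ⊤ c) := by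
  have h : itComm (N.comap π) ⊤ c ≤ (itComm N ⊤ 1).comap π :=
    (itComm_comap_top_le π N c).trans (comap_mono (itComm_antitone N ⊤ hc))
  change (itComm _ ⊤ c).relIndex ((itComm N ⊤ 1).comap π ⊓ _) = _
  rw [inf_eq_right.mpr h]

theorem card_multiplier_dvd_of_nilpotent_class_le_general {G : Type} [Group G]
    {F : Type} [Group F] (π : F →* G) (hπ : Function.Surjective π)
    (N : Subgroup G) [N.Normal] (c t : ℕ) (hc : 1 ≤ c) (ht : 2 ≤ t)
    (hnil : itComm N ⊤ t = ⊥) :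
    Nat.card (itComm N ⊤ c) * Nat.card (McPair π N c) ∣
      Nat.card (McPairQuot π N (itComm N ⊤ 1) c) *
        ∏ i ∈ Finset.Icc 1 (t - 1), Nat.card (tensorPair (itComm N ⊤ i) (G ⧸ itComm N ⊤ i) c) := by
  let H : ℕ → Subgroup F := fun i => itComm ((itComm N ⊤ i).comap π) ⊤ c
  have hH : Antitone H := fun i j hij => itComm_mono (comap_mono (itComm_antitone N ⊤ hij)) ⊤ c
  have hHt : H t = itComm π.ker ⊤ c := by simp only [H, hnil, MonoidHom.comap_bot]
  have htel := relIndex_eq_prod_Ico_of_antitone hH (by omega : 1 ≤ t)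
  rw [card_itComm_mul_card_mcPair hπ N c, card_mcPairQuot_itComm_one π N hc, ← hHt,
    ← relIndex_mul_relIndex (H t) (H 1) (itComm (N.comap π) ⊤ c) (hH (by omega))
      (hH zero_le_one), htel, mul_comm,
    Finset.Icc_sub_one_right_eq_Ico_of_not_isMin (not_isMin_of_lt (by omega : 0 < t))]
  refine mul_dvd_mul_left _ (Finset.prod_dvd_prod_of_dvd _ _ fun i hi => ?_)
  have hlayer := card_layer_dvd_card_tensorPair N hπ (Finset.mem_Ico.mp hi).1 c
  rwa [card_layer] at hlayer

/-- Let `(G,N)` be a pair of finite groups which is nilpotent of class at most `t`, `t ≥ 2`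
(`[N,_t G] = 1`), and `π : F ↠ G` a free presentation.  Then
`|[N,_c G]| · |M^{(c)}(G,N)|` divides
`|M^{(c)}(G/[N,G], N/[N,G])| · ∏_{i=1}^{t−1} |⊗^{c+1}([N,_i G], G/[N,_i G])|`. -/
theorem card_multiplier_dvd_of_nilpotent_class_le {G : Type} [Group G] [Finite G]
    {F : Type} [Group F] [IsFreeGroup F] (π : F →* G) (hπ : Function.Surjective π)
    (N : Subgroup G) [N.Normal] (c t : ℕ) (hc : 1 ≤ c) (ht : 2 ≤ t)
    (hnil : itComm N ⊤ t = ⊥) :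
    Nat.card (itComm N ⊤ c) * Nat.card (McPair π N c) ∣
      Nat.card (McPairQuot π N (itComm N ⊤ 1) c) *
        ∏ i ∈ Finset.Icc 1 (t - 1), Nat.card (tensorPair (itComm N ⊤ i) (G ⧸ itComm N ⊤ i) c) :=
  card_multiplier_dvd_of_nilpotent_class_le_general π hπ N c t hc ht hnil
end
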